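/- arXiv:1905.07397 — 3 statements merged into one kernel-verified Lean document; each statement's English description precedes it below -/
import Mathlib

section
/- For all real p with 0 < p < 1/2, the quantity (1-p)·p²/(1 - (1-p)·p·(3-2p)) is strictly less than p·(1-p), with equality holding when p = 0 or p = 1/2. -/
/-! The denominator is `p + (1 - p)² (1 - 2p)`, so it exceeds `p` exactly when `p < 1/2`;
dividing `(1 - p) p²` by something larger than `p` gives less than `(1 - p) p² / p = p (1 - p)`. -/

lemma one_sub_mul_three_sub_eq (p : ℝ) :
    1 - (1 - p) * p * (3 - 2 * p) = p + (1 - p) ^ 2 * (1 - 2 * p) := by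
  ring

lemma lt_one_sub_mul_three_sub {p : ℝ} (hp : p < 1 / 2) :
    p < 1 - (1 - p) * p * (3 - 2 * p) := by
  have hgap : 0 < (1 - p) ^ 2 * (1 - 2 * p) := by
    have : 0 < 1 - p := by linarith
    have : 0 < 1 - 2 * p := by linarith
    positivity
  rw [one_sub_mul_three_sub_eq]
  linarith

/-- For all real `p` with `0 < p < 1/2`, the quantity
`(1-p)·p²/(1 - (1-p)·p·(3-2p))` is strictly less than `p·(1-p)`,
with equality holding when `p = 0` or `p = 1/2`. -/
theorem payforward_bound_lt_honest :
    (∀ p : ℝ, 0 < p → p < 1/2 →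
      (1 - p) * p ^ 2 / (1 - (1 - p) * p * (3 - 2 * p)) < p * (1 - p)) ∧
    ((1 - (0:ℝ)) * 0 ^ 2 / (1 - (1 - 0) * 0 * (3 - 2 * 0)) = 0 * (1 - 0)) ∧
    ((1 - (1/2:ℝ)) * (1/2) ^ 2 / (1 - (1 - 1/2) * (1/2) * (3 - 2 * (1/2)))
      = (1/2) * (1 - 1/2)) := by
  refine ⟨fun p hp0 hp => ?_, by norm_num, by norm_num⟩
  have hnum : 0 < (1 - p) * p ^ 2 := by
    have : 0 < 1 - p := by linarith
    positivity
  calc (1 - p) * p ^ 2 / (1 - (1 - p) * p * (3 - 2 * p))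
      < (1 - p) * p ^ 2 / p := div_lt_div_of_pos_left hnum hp0 (lt_one_sub_mul_three_sub hp)
    _ = p * (1 - p) := by field_simp
end

section
/- Let 0 < p < 1/2 and 0 < α ≤ 1, 0 < β ≤ (p/(1-p))². Define π = (α - α·p)/(α - α·p + β) and Q(α,β) = π·β / ((1-π)·(2(1-α)(1-p) + α(1-p) + p) + π·(2β + 1 - β)). Then Q(α,β) ≤ (1-p)·p²/(1 - (1-p)·p·(3-2p)). -/
/-!
Since `π = a / (a + β)` with `a = α (1 - p)`, clearing `a + β` and then dividing by `a β` gives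
`Q(α, β) = (D / a + 1 + 1 / β)⁻¹` with `D = 2 (1 - α)(1 - p) + α (1 - p) + p`.
Both `D / a` and `1 / β` decrease as `α` and `β` grow, so `Q` is largest at `α = 1`,
`β = (p / (1 - p))²`, where `D / a = 1 / (1 - p)` and the value is the stated bound.
-/

lemma Q_eq_inv_sum (a β D : ℝ) (ha : 0 < a) (hβ : 0 < β) :
    a / (a + β) * β / ((1 - a / (a + β)) * D + a / (a + β) * (2 * β + 1 - β))
      = (D / a + 1 + 1 / β)⁻¹ := by
  field_simp
  ring

lemma inv_one_sub_le_div (p α : ℝ) (hp : p < 1) (hα0 : 0 < α) (hα1 : α ≤ 1) :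
    1 / (1 - p) ≤ (2 * (1 - α) * (1 - p) + α * (1 - p) + p) / (α - α * p) := by
  have h1p : 0 < 1 - p := by linarith
  rw [show α - α * p = α * (1 - p) by ring, div_le_div_iff₀ h1p (by positivity)]
  nlinarith [mul_nonneg (sub_nonneg.2 hα1) h1p.le]

lemma bound_eq_inv_sum (p : ℝ) (hp0 : 0 < p) (hp1 : p < 1) :
    (1 - p) * p ^ 2 / (1 - (1 - p) * p * (3 - 2 * p))
      = (1 / (1 - p) + 1 + 1 / (p / (1 - p)) ^ 2)⁻¹ := by
  have h1p : 1 - p ≠ 0 := by linarith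
  have hp : p ≠ 0 := hp0.ne'
  field_simp
  ring

/-- For `0 < p < 1/2`, `0 < α ≤ 1`, `0 < β ≤ (p/(1-p))²`, with
`π = (α - αp)/(α - αp + β)` and
`Q(α,β) = πβ / ((1-π)(2(1-α)(1-p) + α(1-p) + p) + π(2β + 1 - β))`,
we have `Q(α,β) ≤ (1-p)p²/(1-(1-p)p(3-2p))`. -/
theorem Q_le_bound (p α β : ℝ) (hp0 : 0 < p) (hp1 : p < 1/2)
    (hα0 : 0 < α) (hα1 : α ≤ 1) (hβ0 : 0 < β) (hβ1 : β ≤ (p / (1 - p)) ^ 2) :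
    ((α - α * p) / (α - α * p + β)) * β /
      ((1 - (α - α * p) / (α - α * p + β)) * (2 * (1 - α) * (1 - p) + α * (1 - p) + p)
        + ((α - α * p) / (α - α * p + β)) * (2 * β + 1 - β))
      ≤ (1 - p) * p ^ 2 / (1 - (1 - p) * p * (3 - 2 * p)) := by
  have hp : p < 1 := by linarith
  have ha : 0 < α - α * p := by nlinarith
  rw [Q_eq_inv_sum _ _ _ ha hβ0, bound_eq_inv_sum p hp0 hp]
  have h1p : 0 < 1 - p := by linarith
  apply inv_anti₀ (by positivity)
  gcongr ?_ + 1 + ?_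
  · exact inv_one_sub_le_div p α hp hα0 hα1
  · exact one_div_le_one_div_of_le hβ0 hβ1
end

section
/- For 0 < p ≤ 0.344 and 0 ≤ w ≤ 1: 1 - p(1-p)·w ≥ w·p/(1-p). -/
/-!
Both sides are affine in `w`: the claim is `w * (p * (1 - p) + p / (1 - p)) ≤ 1`, so for
`0 ≤ w ≤ 1` it suffices that the coefficient is at most `1`. Multiplied by `1 - p > 0` this is
`p ^ 3 - 2 * p ^ 2 + 3 * p - 1 ≤ 0`; the cubic is increasing (its derivative has negative
discriminant) and its real root is about `0.430`, above `0.344`.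
-/

theorem cubic_nonpos_of_le {p : ℝ} (hp : p ≤ 0.344) : p ^ 3 - 2 * p ^ 2 + 3 * p - 1 ≤ 0 := by
  nlinarith [sq_nonneg (p - 1), sq_nonneg p]

theorem mul_one_sub_add_div_one_sub_le_one {p : ℝ} (hp : p ≤ 0.344) :
    p * (1 - p) + p / (1 - p) ≤ 1 := by
  have hq : 0 < 1 - p := by linarith
  have hsum : p * (1 - p) + p / (1 - p) = (p * (1 - p) ^ 2 + p) / (1 - p) := by
    field_simp
  rw [hsum, div_le_one hq]
  linear_combination cubic_nonpos_of_le hp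

theorem release_dominates_capitulation_general (p w : ℝ) (hp1 : p ≤ 0.344)
    (hw0 : 0 ≤ w) (hw1 : w ≤ 1) :
    1 - p * (1 - p) * w ≥ w * p / (1 - p) := by
  have hcoef := mul_le_one₀ (mul_one_sub_add_div_one_sub_le_one hp1) hw0 hw1
  rw [ge_iff_le, mul_div_assoc]
  linear_combination hcoef

/-- For `0 < p ≤ 0.344` and `0 ≤ w ≤ 1`:
`1 - p(1-p)w ≥ w·p/(1-p)`. -/
theorem release_dominates_capitulation (p w : ℝ) (hp0 : 0 < p) (hp1 : p ≤ 0.344)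
    (hw0 : 0 ≤ w) (hw1 : w ≤ 1) :
    1 - p * (1 - p) * w ≥ w * p / (1 - p) :=
  release_dominates_capitulation_general p w hp1 hw0 hw1
end
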